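/- Let 𝔓 be a self-dual cone in a nontrivial complex Hilbert space ℌ, let A be a bounded self-adjoint operator with e^{−βA} ⊵ 0 w.r.t. 𝔓 for all β ≥ 0, and let B be a bounded self-adjoint operator that is ergodic w.r.t. 𝔓. Then e^{−β(A−B)} ⊳ 0 w.r.t. 𝔓 for all β > 0; in particular, for every real s > −E(A−B), the operator (A − B) + s·1 is invertible and ((A − B) + s·1)^{−1} ⊳ 0 w.r.t. 𝔓. -/

import Mathlib

open scoped ComplexOrder

noncomputable section

variable {H : Type*} [NormedAddCommGroup H] [InnerProductSpace ℂ H]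

/-- A self-dual cone in a complex Hilbert space: a closed convex subset,
stable under multiplication by nonnegative reals, equal to its dual cone. -/
def IsSelfDualCone (P : Set H) : Prop :=
  IsClosed P ∧ Convex ℝ P ∧ (∀ t : ℝ, 0 ≤ t → ∀ x ∈ P, t • x ∈ P) ∧
    P = {η : H | ∀ ξ ∈ P, 0 ≤ (inner ℂ η ξ : ℂ)}

/-- `A ⊵ 0` w.r.t. `P`: the operator `A` preserves the positivity. -/
def PosPres (P : Set H) (A : H →L[ℂ] H) : Prop := ∀ x ∈ P, A x ∈ P

/-- `η > 0` w.r.t. `P`: the vector `η` is strictly positive. -/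
def StrictPos (P : Set H) (η : H) : Prop :=
  η ∈ P ∧ ∀ ξ ∈ P, ξ ≠ 0 → 0 < (inner ℂ ξ η : ℂ)

/-- `A ⊳ 0` w.r.t. `P`: the operator `A` improves the positivity. -/
def PosImp (P : Set H) (A : H →L[ℂ] H) : Prop :=
  ∀ ξ ∈ P, ξ ≠ 0 → StrictPos P (A ξ)

/-- `E(A)`: the infimum of the (real) spectrum of `A`. -/
def specInf (A : H →L[ℂ] H) : ℝ := sInf {t : ℝ | (t : ℂ) ∈ spectrum ℂ A}

/-- `B` is ergodic w.r.t. `P`. -/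
def IsErgodic (P : Set H) (B : H →L[ℂ] H) : Prop :=
  PosPres P B ∧ ∀ ξ ∈ P, ξ ≠ 0 → ∀ η ∈ P, η ≠ 0 → ∃ k : ℕ, 0 < (inner ℂ ξ ((B ^ k) η) : ℂ)

/-!
By Duhamel's formula, `U t = e^{-t(A-B)}` solves the Volterra equation `U = S + V U`,
where `S t = e^{-tA}` and `(V F) t = ∫₀ᵗ S (t - s) B F(s) ds`. Iterating it gives the Dyson
expansion `U = ∑_{j<n} Vʲ S + Vⁿ U` with `‖(Vⁿ U) t‖ = O((K t)ⁿ / n!)`. Every `Vʲ S`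
preserves `𝔓`, hence so does `U`. For `ζ, ξ ∈ 𝔓 \ {0}` ergodicity gives `k` with
`⟨e^{-βA} ζ, Bᵏ ξ⟩ > 0`; this is the limit of the integrand of the `k`-fold integral
`⟨ζ, (Vᵏ S)(β) ξ⟩` as all intermediate times tend to `0`, so that term, and with it
`⟨ζ, U(β) ξ⟩`, is positive. Finally, for `s > -E(A - B)` the resolvent is the Laplace
transform `∫₀^∞ e^{-t(A-B+s)} dt`, which converges in norm because `‖e^{-tX}‖ ≤ e^{-t E(X)}`
for self-adjoint `X`, and so inherits positivity improvement.
-/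

open NormedSpace MeasureTheory Set Filter Topology Finset

-- Needed by the `NormedSpace.exp` API; instance search does not find it.
instance {E : Type*} [NormedAddCommGroup E] [NormedSpace ℂ E] :
    NormedAlgebra ℚ (E →L[ℂ] E) :=
  NormedAlgebra.restrictScalars ℚ ℂ (E →L[ℂ] E)

theorem Module.End.eq_sum_pow_apply_add_pow_apply {R M : Type*} [Semiring R] [AddCommMonoid M]
    [Module R M] {V : Module.End R M} {u g : M} (h : u = g + V u) (n : ℕ) :
    u = ∑ j ∈ range n, (V ^ j) g + (V ^ n) u := by
  induction n with
  | zero => simp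
  | succ n ih =>
    rw [sum_range_succ, add_assoc, pow_succ, Module.End.mul_apply, ← map_add, ← h]
    exact ih

section Volterra

open scoped Nat

variable {E : Type*} [NormedAddCommGroup E] [NormedSpace ℂ E]

def volterra (S : C(ℝ, E →L[ℂ] E)) (B : E →L[ℂ] E) :
    C(ℝ, E →L[ℂ] E) →ₗ[ℂ] C(ℝ, E →L[ℂ] E) where
  toFun F := ⟨fun t => ∫ s in (0 : ℝ)..t, S (t - s) * B * F s,
    intervalIntegral.continuous_parametric_intervalIntegral_of_continuous (by fun_prop)
      continuous_id⟩
  map_add' F G := by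
    ext1 t
    simp only [ContinuousMap.coe_mk, ContinuousMap.add_apply, mul_add]
    exact intervalIntegral.integral_add (Continuous.intervalIntegrable (by fun_prop) _ _)
      (Continuous.intervalIntegrable (by fun_prop) _ _)
  map_smul' c F := by
    ext1 t
    simp only [ContinuousMap.coe_mk, ContinuousMap.smul_apply, mul_smul_comm,
      intervalIntegral.integral_smul, RingHom.id_apply]

variable {S : C(ℝ, E →L[ℂ] E)} {B : E →L[ℂ] E}

lemma volterra_apply (F : C(ℝ, E →L[ℂ] E)) (t : ℝ) :
    volterra S B F t = ∫ s in (0 : ℝ)..t, S (t - s) * B * F s := rfl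

lemma norm_volterra_pow_apply_le {F : C(ℝ, E →L[ℂ] E)} {b M C : ℝ}
    (hS : ∀ t ∈ Icc 0 b, ‖S t‖ ≤ M) (hF : ∀ t ∈ Icc 0 b, ‖F t‖ ≤ C) (n : ℕ) :
    ∀ t ∈ Icc 0 b, ‖(volterra S B ^ n) F t‖ ≤ C * ((M * ‖B‖ * t) ^ n / n !) := by
  induction n with
  | zero => simpa using hF
  | succ n ih =>
    intro t ht
    have hM : 0 ≤ M := (norm_nonneg _).trans (hS t ht)
    have hC : 0 ≤ C := (norm_nonneg _).trans (hF t ht)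
    set G := (volterra S B ^ n) F
    have hbound : ∀ s ∈ Icc 0 t,
        ‖S (t - s) * B * G s‖ ≤ C * (M * ‖B‖) ^ (n + 1) / n ! * s ^ n := by
      intro s hs
      have hs' : s ∈ Icc 0 b := ⟨hs.1, hs.2.trans ht.2⟩
      calc ‖S (t - s) * B * G s‖ ≤ ‖S (t - s)‖ * ‖B‖ * ‖G s‖ := norm_mul₃_le
        _ ≤ M * ‖B‖ * (C * ((M * ‖B‖ * s) ^ n / n !)) := by
          gcongr
          · exact hS _ ⟨by linarith [hs.2], by linarith [hs.1, ht.2]⟩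
          · exact ih s hs'
        _ = C * (M * ‖B‖) ^ (n + 1) / n ! * s ^ n := by ring
    calc ‖(volterra S B ^ (n + 1)) F t‖ = ‖∫ s in (0 : ℝ)..t, S (t - s) * B * G s‖ := by
          rw [pow_succ', Module.End.mul_apply, volterra_apply]
      _ ≤ ∫ s in (0 : ℝ)..t, C * (M * ‖B‖) ^ (n + 1) / n ! * s ^ n :=
          intervalIntegral.norm_integral_le_of_norm_le ht.1 (ae_of_all _ fun s hs =>
            hbound s (Ioc_subset_Icc_self hs)) (Continuous.intervalIntegrable (by fun_prop) _ _)
      _ = C * ((M * ‖B‖ * t) ^ (n + 1) / (n + 1)!) := by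
          rw [intervalIntegral.integral_const_mul, integral_pow, Nat.factorial_succ]
          push_cast
          field_simp
          ring

lemma tendsto_sum_volterra_pow_apply {U : C(ℝ, E →L[ℂ] E)} (hU : U = S + volterra S B U)
    {t : ℝ} (ht : 0 ≤ t) :
    Tendsto (fun n => ∑ j ∈ range n, (volterra S B ^ j) S t) atTop (𝓝 (U t)) := by
  obtain ⟨M, hM⟩ := isCompact_Icc.exists_bound_of_continuousOn (S.continuous.continuousOn
    (s := Icc 0 t))
  obtain ⟨C, hC⟩ := isCompact_Icc.exists_bound_of_continuousOn (U.continuous.continuousOn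
    (s := Icc 0 t))
  have hrem : Tendsto (fun n => (volterra S B ^ n) U t) atTop (𝓝 0) := by
    refine squeeze_zero_norm (fun n => norm_volterra_pow_apply_le hM hC n t ⟨ht, le_rfl⟩) ?_
    simpa using (FloorSemiring.tendsto_pow_div_factorial_atTop (M * ‖B‖ * t)).const_mul C
  have hsum : ∀ n, ∑ j ∈ range n, (volterra S B ^ j) S t = U t - (volterra S B ^ n) U t := by
    intro n
    have h := DFunLike.congr_fun (Module.End.eq_sum_pow_apply_add_pow_apply hU n) t
    rw [ContinuousMap.add_apply, ContinuousMap.sum_apply] at h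
    exact eq_sub_of_add_eq h.symm
  simpa [hsum] using (tendsto_const_nhds (x := U t)).sub hrem

end Volterra

section ExpNeg

variable {E : Type*} [NormedAddCommGroup E] [NormedSpace ℂ E] [CompleteSpace E]

def expNeg (A : E →L[ℂ] E) : C(ℝ, E →L[ℂ] E) :=
  ⟨fun t => exp (-(t : ℂ) • A), by fun_prop⟩

variable (A B : E →L[ℂ] E)

lemma expNeg_apply (t : ℝ) : expNeg A t = exp (-(t : ℂ) • A) := rfl

lemma expNeg_eq_exp_smul_neg (t : ℝ) : expNeg A t = exp (t • -A) := by
  rw [expNeg_apply, neg_smul, ← smul_neg, Complex.coe_smul]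

@[simp] lemma expNeg_zero : expNeg A 0 = 1 := by simp [expNeg_apply]

lemma hasDerivAt_expNeg (t : ℝ) : HasDerivAt (expNeg A) (-A * expNeg A t) t := by
  simpa only [← expNeg_eq_exp_smul_neg] using hasDerivAt_exp_smul_const' (𝕂 := ℝ) (-A) t

lemma commute_expNeg (t : ℝ) : Commute A (expNeg A t) :=
  ((Commute.refl A).smul_right _).exp_right

lemma isUnit_expNeg (t : ℝ) : IsUnit (expNeg A t) := isUnit_exp _

lemma expNeg_sub_eq_add_volterra :
    expNeg (A - B) = expNeg A + volterra (expNeg A) B (expNeg (A - B)) := by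
  ext1 t
  have hderiv : ∀ s ∈ uIcc 0 t, HasDerivAt (fun s => expNeg A (t - s) * expNeg (A - B) s)
      (expNeg A (t - s) * B * expNeg (A - B) s) s := fun s _ => by
    refine (((hasDerivAt_expNeg A (t - s)).comp_const_sub t s).mul
      (hasDerivAt_expNeg (A - B) s)).congr_deriv ?_
    simp only [neg_mul, (commute_expNeg A (t - s)).eq]
    noncomm_ring
  rw [ContinuousMap.add_apply, volterra_apply,
    intervalIntegral.integral_eq_sub_of_hasDerivAt hderiv
      (Continuous.intervalIntegrable (by fun_prop) _ _)]
  simp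

lemma expNeg_add_smul_one (X : E →L[ℂ] E) (s t : ℝ) :
    expNeg (X + (s : ℂ) • 1) t = (Real.exp (-(t * s)) : ℂ) • expNeg X t := by
  have hscalar :
      -(t : ℂ) • (s : ℂ) • (1 : E →L[ℂ] E) = algebraMap ℂ _ (-(t * s) : ℝ) := by
    rw [smul_smul, Algebra.algebraMap_eq_smul_one]
    push_cast
    ring_nf
  rw [expNeg_apply, expNeg_apply, smul_add, hscalar,
    exp_add_of_commute (Algebra.commutes _ _).symm, ← algebraMap_exp_comm,
    Algebra.algebraMap_eq_smul_one, mul_smul_one, ← Complex.exp_eq_exp_ℂ,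
    ← Complex.ofReal_exp]

lemma integral_expNeg {D : E →L[ℂ] E} (hD : IsUnit D) (T : ℝ) :
    ∫ t in (0 : ℝ)..T, expNeg D t = Ring.inverse D * (1 - expNeg D T) := by
  have hderiv : ∀ t ∈ uIcc 0 T,
      HasDerivAt (fun t => -(Ring.inverse D * expNeg D t)) (expNeg D t) t := fun t _ => by
    refine ((hasDerivAt_expNeg D t).const_mul (Ring.inverse D)).neg.congr_deriv ?_
    rw [neg_mul, mul_neg, neg_neg, ← mul_assoc, Ring.inverse_mul_cancel _ hD, one_mul]
  rw [intervalIntegral.integral_eq_sub_of_hasDerivAt hderiv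
    ((map_continuous _).intervalIntegrable _ _), expNeg_zero, mul_sub, mul_one]
  abel

lemma tendsto_integral_expNeg {D : E →L[ℂ] E} (hD : IsUnit D)
    (h : Tendsto (expNeg D) atTop (𝓝 0)) :
    Tendsto (fun T => ∫ t in (0 : ℝ)..T, expNeg D t) atTop (𝓝 (Ring.inverse D)) := by
  simp_rw [integral_expNeg hD]
  simpa using (h.const_sub 1).const_mul (Ring.inverse D)

end ExpNeg

lemma re_inner_intervalIntegral [CompleteSpace H] (ζ : H) {f : ℝ → H} {a b : ℝ}
    (hf : IntervalIntegrable f volume a b) :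
    (inner ℂ ζ (∫ t in a..b, f t)).re = ∫ t in a..b, (inner ℂ ζ (f t)).re :=
  ((Complex.reCLM.comp ((innerSL ℂ ζ).restrictScalars ℝ)).intervalIntegral_comp_comm hf).symm

namespace IsSelfDualCone

variable {P : Set H}

lemma inner_nonneg (hP : IsSelfDualCone P) {x y : H} (hx : x ∈ P) (hy : y ∈ P) :
    0 ≤ (inner ℂ x y : ℂ) := by
  rw [hP.2.2.2] at hx
  exact hx y hy

lemma mem_of_forall_inner_nonneg (hP : IsSelfDualCone P) {x : H}
    (h : ∀ ξ ∈ P, 0 ≤ (inner ℂ ξ x : ℂ)) : x ∈ P := by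
  rw [hP.2.2.2]
  intro ξ hξ
  rw [← inner_conj_symm, ← Complex.star_def, (IsSelfAdjoint.of_nonneg (h ξ hξ)).star_eq]
  exact h ξ hξ

lemma zero_mem (hP : IsSelfDualCone P) : (0 : H) ∈ P :=
  hP.mem_of_forall_inner_nonneg fun _ _ => by simp

lemma add_mem (hP : IsSelfDualCone P) {x y : H} (hx : x ∈ P) (hy : y ∈ P) : x + y ∈ P :=
  hP.mem_of_forall_inner_nonneg fun ξ hξ => by
    rw [inner_add_right]
    exact add_nonneg (hP.inner_nonneg hξ hx) (hP.inner_nonneg hξ hy)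

lemma inner_pos_iff (hP : IsSelfDualCone P) {x y : H} (hx : x ∈ P) (hy : y ∈ P) :
    0 < (inner ℂ x y : ℂ) ↔ 0 < (inner ℂ x y : ℂ).re := by
  rw [Complex.pos_iff, and_iff_left (Complex.nonneg_iff.1 (hP.inner_nonneg hx hy)).2]

lemma intervalIntegral_mem [CompleteSpace H] (hP : IsSelfDualCone P) {f : ℝ → H} {a b : ℝ}
    (hab : a ≤ b) (hf : IntervalIntegrable f volume a b) (h : ∀ t ∈ Ioc a b, f t ∈ P) :
    ∫ t in a..b, f t ∈ P := by
  refine hP.mem_of_forall_inner_nonneg fun ξ hξ => ?_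
  have hcomm := (innerSL ℂ ξ).intervalIntegral_comp_comm hf
  simp only [innerSL_apply_apply] at hcomm
  rw [← hcomm, intervalIntegral.integral_of_le hab]
  exact integral_nonneg_of_ae <| (ae_restrict_iff' measurableSet_Ioc).2 <|
    ae_of_all _ fun t ht => hP.inner_nonneg hξ (h t ht)

end IsSelfDualCone

section Positivity

variable {P : Set H}

lemma PosPres.add {X Y : H →L[ℂ] H} (hP : IsSelfDualCone P) (hX : PosPres P X)
    (hY : PosPres P Y) : PosPres P (X + Y) :=
  fun x hx => hP.add_mem (hX x hx) (hY x hx)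

lemma PosPres.mul {X Y : H →L[ℂ] H} (hX : PosPres P X) (hY : PosPres P Y) : PosPres P (X * Y) :=
  fun x hx => hX _ (hY x hx)

lemma PosPres.sum {ι : Type*} {s : Finset ι} {X : ι → H →L[ℂ] H} (hP : IsSelfDualCone P)
    (hX : ∀ i ∈ s, PosPres P (X i)) : PosPres P (∑ i ∈ s, X i) :=
  Finset.sum_induction _ _ (fun _ _ => PosPres.add hP) (fun _ _ => hP.zero_mem) hX

lemma IsSelfDualCone.isClosed_setOf_posPres (hP : IsSelfDualCone P) :
    IsClosed {X : H →L[ℂ] H | PosPres P X} := by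
  simp only [PosPres, ofPred_forall]
  exact isClosed_biInter fun x _ => hP.1.preimage (continuous_id.clm_apply continuous_const)

variable [CompleteSpace H]

lemma PosPres.intervalIntegral {F : ℝ → H →L[ℂ] H} {a b : ℝ} (hP : IsSelfDualCone P)
    (hab : a ≤ b) (hF : Continuous F) (h : ∀ t ∈ Ioc a b, PosPres P (F t)) :
    PosPres P (∫ t in a..b, F t) := fun x hx => by
  rw [ContinuousLinearMap.intervalIntegral_apply (hF.intervalIntegrable a b)]
  exact hP.intervalIntegral_mem hab ((hF.clm_apply continuous_const).intervalIntegrable a b)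
    fun t ht => h t ht x hx

lemma posPres_volterra_pow_apply {S F : C(ℝ, H →L[ℂ] H)} {B : H →L[ℂ] H}
    (hP : IsSelfDualCone P) (hS : ∀ t, 0 ≤ t → PosPres P (S t)) (hB : PosPres P B)
    (hF : ∀ t, 0 ≤ t → PosPres P (F t)) (n : ℕ) {t : ℝ} (ht : 0 ≤ t) :
    PosPres P ((volterra S B ^ n) F t) := by
  induction n generalizing t with
  | zero => exact hF t ht
  | succ n ih =>
    rw [pow_succ', Module.End.mul_apply, volterra_apply]
    exact PosPres.intervalIntegral hP ht (by fun_prop) fun s hs =>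
      ((hS _ (sub_nonneg.2 hs.2)).mul hB).mul (ih hs.1.le)

theorem posPres_expNeg_sub {A B : H →L[ℂ] H} (hP : IsSelfDualCone P)
    (hA : ∀ t, 0 ≤ t → PosPres P (expNeg A t)) (hB : PosPres P B) {t : ℝ} (ht : 0 ≤ t) :
    PosPres P (expNeg (A - B) t) :=
  hP.isClosed_setOf_posPres.mem_of_tendsto
    (tendsto_sum_volterra_pow_apply (expNeg_sub_eq_add_volterra A B) ht)
    (Eventually.of_forall fun _ => PosPres.sum hP fun j _ =>
      posPres_volterra_pow_apply hP hA hB hA j ht)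

end Positivity

section StrictPositivity

variable [CompleteSpace H] {P : Set H} {A B : H →L[ℂ] H}

lemma isSelfAdjoint_expNeg (hA : IsSelfAdjoint A) (t : ℝ) : IsSelfAdjoint (expNeg A t) := by
  rw [expNeg_eq_exp_smul_neg]
  exact ((IsSelfAdjoint.all t).smul hA.neg).exp

lemma re_inner_volterra_pow_pos (hP : IsSelfDualCone P) (hA : IsSelfAdjoint A)
    (hB : IsSelfAdjoint B) (hApos : ∀ t, 0 ≤ t → PosPres P (expNeg A t)) (hBpos : PosPres P B)
    {η : H} (hη : η ∈ P) (k : ℕ) {ζ : H} (hζ : ζ ∈ P) {γ : ℝ} (hγ : 0 < γ)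
    (hpos : 0 < (inner ℂ ζ (expNeg A γ ((B ^ k) η))).re) :
    0 < (inner ℂ ζ ((volterra (expNeg A) B ^ k) (expNeg A) γ η)).re := by
  induction k generalizing ζ γ with
  | zero => simpa using hpos
  | succ k ih =>
    set G := (volterra (expNeg A) B ^ k) (expNeg A)
    set ζ' : ℝ → H := fun s => B (expNeg A (γ - s) ζ)
    have hζ' : ∀ s ∈ Icc 0 γ, ζ' s ∈ P := fun s hs =>
      hBpos _ (hApos _ (sub_nonneg.2 hs.2) ζ hζ)
    have hG : ∀ s, 0 ≤ s → G s η ∈ P := fun s hs =>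
      posPres_volterra_pow_apply hP hApos hBpos hApos k hs η hη
    have hswap : ∀ s x, inner ℂ ζ (expNeg A (γ - s) (B x)) = inner ℂ (ζ' s) x := fun s x =>
      ((isSelfAdjoint_expNeg hA _).isSymmetric ζ (B x)).symm.trans (hB.isSymmetric _ x).symm
    -- at `s = 0` this pairing is the one in `hpos`, so by continuity the induction hypothesis
    -- makes the integrand positive at some time `c ∈ (0, γ)`
    obtain ⟨c, hc, hc_pos⟩ :
        ∃ c ∈ Ioo 0 γ, 0 < (inner ℂ (ζ' c) (expNeg A c ((B ^ k) η))).re := by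
      have hcont : Continuous fun s => (inner ℂ (ζ' s) (expNeg A s ((B ^ k) η))).re := by
        fun_prop
      have h0 : 0 < (inner ℂ (ζ' 0) (expNeg A 0 ((B ^ k) η))).re := by
        rwa [expNeg_zero, one_apply_eq_self, ← hswap, sub_zero, ← mul_apply_eq_comp B,
          ← pow_succ']
      exact ((hcont.continuousWithinAt.eventually (lt_mem_nhds h0)).and
        (Ioo_mem_nhdsGT hγ)).exists.imp fun c h => ⟨h.2, h.1⟩
    rw [pow_succ', Module.End.mul_apply, volterra_apply,
      ContinuousLinearMap.intervalIntegral_apply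
        (Continuous.intervalIntegrable (by fun_prop) _ _),
      re_inner_intervalIntegral _ (Continuous.intervalIntegrable (by fun_prop) _ _)]
    simp_rw [mul_apply_eq_comp, hswap]
    refine lt_of_eq_of_lt intervalIntegral.integral_zero.symm
      (intervalIntegral.integral_lt_integral_of_continuousOn_of_le_of_exists_lt hγ
        continuousOn_const (by fun_prop) (fun s hs => ?_) ⟨c, Ioo_subset_Icc_self hc, ?_⟩)
    · exact (Complex.nonneg_iff.1 (hP.inner_nonneg (hζ' s (Ioc_subset_Icc_self hs))
        (hG s hs.1.le))).1
    · exact ih (hζ' c (Ioo_subset_Icc_self hc)) hc.1 hc_pos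

theorem posImp_expNeg_sub (hP : IsSelfDualCone P) (hA : IsSelfAdjoint A) (hB : IsSelfAdjoint B)
    (hApos : ∀ t, 0 ≤ t → PosPres P (expNeg A t)) (hBerg : IsErgodic P B) {β : ℝ}
    (hβ : 0 < β) : PosImp P (expNeg (A - B) β) := by
  set U := expNeg (A - B)
  set V := volterra (expNeg A) B
  have hU : ∀ t, 0 ≤ t → PosPres P (U t) := fun t => posPres_expNeg_sub hP hApos hBerg.1
  have hV : ∀ j, PosPres P ((V ^ j) (expNeg A) β) := fun j =>
    posPres_volterra_pow_apply hP hApos hBerg.1 hApos j hβ.le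
  intro ξ hξ hξ0
  refine ⟨hU β hβ.le ξ hξ, fun ζ hζ hζ0 => ?_⟩
  have hζ0' : expNeg A β ζ ≠ 0 :=
    ((ContinuousLinearMap.isUnit_iff_bijective.1 (isUnit_expNeg A β)).1.ne_iff'
      (map_zero _)).2 hζ0
  obtain ⟨k, hk⟩ := hBerg.2 _ (hApos β hβ.le ζ hζ) hζ0' ξ hξ hξ0
  -- the other terms of the Dyson expansion of `U β`
  have hrest : PosPres P (U β - (V ^ k) (expNeg A) β) := by
    have h := DFunLike.congr_fun
      (Module.End.eq_sum_pow_apply_add_pow_apply (expNeg_sub_eq_add_volterra A B) (k + 1)) β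
    rw [ContinuousMap.add_apply, ContinuousMap.sum_apply, sum_range_succ] at h
    rw [h, add_sub_right_comm, add_sub_cancel_right]
    exact (PosPres.sum hP fun j _ => hV j).add hP
      (posPres_volterra_pow_apply hP hApos hBerg.1 hU _ hβ.le)
  have hk' : 0 < inner ℂ ζ ((V ^ k) (expNeg A) β ξ) := by
    refine (hP.inner_pos_iff hζ (hV k ξ hξ)).2
      (re_inner_volterra_pow_pos hP hA hB hApos hBerg.1 hξ k hζ hβ ?_)
    have hsymm : inner ℂ (expNeg A β ζ) ((B ^ k) ξ) = inner ℂ ζ (expNeg A β ((B ^ k) ξ)) :=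
      (isSelfAdjoint_expNeg hA β).isSymmetric _ _
    exact (Complex.pos_iff.1 (hsymm ▸ hk)).1
  calc 0 < inner ℂ ζ ((V ^ k) (expNeg A) β ξ) + inner ℂ ζ ((U β - (V ^ k) (expNeg A) β) ξ) :=
        add_pos_of_pos_of_nonneg hk' (hP.inner_nonneg hζ (hrest ξ hξ))
    _ = inner ℂ ζ (U β ξ) := by rw [← inner_add_right, sub_apply, add_sub_cancel]

end StrictPositivity

section Resolvent

variable {P : Set H} {X : H →L[ℂ] H}

lemma PosImp.ofReal_smul (hP : IsSelfDualCone P) (h : PosImp P X) {r : ℝ} (hr : 0 < r) :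
    PosImp P ((r : ℂ) • X) := fun ξ hξ hξ0 => by
  refine ⟨?_, fun ζ hζ hζ0 => ?_⟩
  · rw [smul_apply, Complex.coe_smul]
    exact hP.2.2.1 r hr.le _ (h ξ hξ hξ0).1
  · rw [smul_apply, inner_smul_right]
    exact mul_pos (Complex.zero_lt_real.2 hr) ((h ξ hξ hξ0).2 ζ hζ hζ0)

variable [CompleteSpace H]

lemma specInf_le {t : ℝ} (ht : (t : ℂ) ∈ spectrum ℂ X) : specInf X ≤ t := by
  obtain ⟨R, hR⟩ := (spectrum.isCompact (𝕜 := ℂ) X).isBounded.exists_norm_le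
  refine csInf_le ⟨-R, fun u hu => ?_⟩ ht
  have := hR _ hu
  rw [Complex.norm_real, Real.norm_eq_abs] at this
  linarith [neg_abs_le u]

lemma isUnit_add_smul_one {s : ℝ} (hs : -specInf X < s) : IsUnit (X + (s : ℂ) • 1) := by
  by_contra h
  have hmem : ((-s : ℝ) : ℂ) ∈ spectrum ℂ X := spectrum.mem_iff.2 fun hu => h <| by
    simpa [Algebra.algebraMap_eq_smul_one, add_comm] using hu.neg
  linarith [specInf_le hmem]

lemma norm_expNeg_le (hX : IsSelfAdjoint X) {t : ℝ} (ht : 0 ≤ t) :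
    ‖expNeg X t‖ ≤ Real.exp (-(t * specInf X)) := by
  have hsmul : IsSelfAdjoint ((-t) • X) := (IsSelfAdjoint.all _).smul hX
  rw [expNeg_eq_exp_smul_neg, smul_neg, ← neg_smul, ← CFC.real_exp_eq_normedSpace_exp hsmul,
    ← cfc_comp_smul (-t) Real.exp X]
  refine norm_cfc_le (Real.exp_nonneg _) fun x hx => ?_
  rw [Real.norm_eq_abs, Real.abs_exp, smul_eq_mul, Real.exp_le_exp]
  have := specInf_le (t := x) ((spectrum.algebraMap_mem_iff ℂ).2 hx)
  nlinarith

lemma tendsto_expNeg_add_smul_one (hX : IsSelfAdjoint X) {s : ℝ} (hs : -specInf X < s) :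
    Tendsto (expNeg (X + (s : ℂ) • 1)) atTop (𝓝 0) := by
  refine squeeze_zero_norm' ((eventually_ge_atTop 0).mono fun t ht => ?_)
    (Real.tendsto_exp_neg_atTop_nhds_zero.comp
      (tendsto_id.atTop_mul_const (by linarith : 0 < s + specInf X)))
  calc ‖expNeg (X + (s : ℂ) • 1) t‖ = Real.exp (-(t * s)) * ‖expNeg X t‖ := by
        rw [expNeg_add_smul_one, norm_smul, Complex.norm_real, Real.norm_eq_abs, Real.abs_exp]
    _ ≤ Real.exp (-(t * s)) * Real.exp (-(t * specInf X)) := by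
        gcongr
        exact norm_expNeg_le hX ht
    _ = Real.exp (-(id t * (s + specInf X))) := by
        rw [← Real.exp_add, id]
        ring_nf

lemma posImp_of_tendsto_integral (hP : IsSelfDualCone P) {F : C(ℝ, H →L[ℂ] H)}
    (hF : ∀ t, 0 < t → PosImp P (F t))
    (hR : Tendsto (fun T => ∫ t in (0 : ℝ)..T, F t) atTop (𝓝 X)) : PosImp P X := by
  intro ξ hξ hξ0
  have hlim : Tendsto (fun T => ∫ t in (0 : ℝ)..T, F t ξ) atTop (𝓝 (X ξ)) := by
    refine (((ContinuousLinearMap.apply ℂ H ξ).continuous.tendsto X).comp hR).congr fun T => ?_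
    exact ContinuousLinearMap.intervalIntegral_apply (F.continuous.intervalIntegrable _ _) ξ
  have hXξ : X ξ ∈ P := hP.1.mem_of_tendsto hlim <| (eventually_ge_atTop 0).mono fun T hT =>
    hP.intervalIntegral_mem hT
      (((map_continuous F).clm_apply continuous_const).intervalIntegrable _ _)
      fun t ht => (hF t ht.1 ξ hξ hξ0).1
  refine ⟨hXξ, fun ζ hζ hζ0 => (hP.inner_pos_iff hζ hXξ).2 ?_⟩
  set f : ℝ → ℝ := fun t => (inner ℂ ζ (F t ξ)).re
  have hf : Continuous f := by fun_prop
  have hf_pos : ∀ t, 0 < t → 0 < f t := fun t ht =>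
    (hP.inner_pos_iff hζ (hF t ht ξ hξ hξ0).1).1 ((hF t ht ξ hξ hξ0).2 ζ hζ hζ0)
  have hlim_re : Tendsto (fun T => ∫ t in (0 : ℝ)..T, f t) atTop
      (𝓝 (inner ℂ ζ (X ξ)).re) :=
    (((Complex.reCLM.comp ((innerSL ℂ ζ).restrictScalars ℝ)).continuous.tendsto _).comp
      hlim).congr fun T => re_inner_intervalIntegral ζ
        (((map_continuous F).clm_apply continuous_const).intervalIntegrable _ _)
  refine (intervalIntegral.intervalIntegral_pos_of_pos_on (hf.intervalIntegrable _ _)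
    (fun t ht => hf_pos t ht.1) one_pos).trans_le
    (ge_of_tendsto hlim_re ((eventually_ge_atTop 1).mono fun T hT => ?_))
  exact intervalIntegral.integral_mono_interval le_rfl zero_le_one hT
    ((ae_restrict_iff' measurableSet_Ioc).2 (ae_of_all _ fun t ht => (hf_pos t ht.1).le))
    (hf.intervalIntegrable _ _)

end Resolvent

theorem exp_sub_ergodic_posImp_general [CompleteSpace H]
    (P : Set H) (hP : IsSelfDualCone P) (A B : H →L[ℂ] H)
    (hA : IsSelfAdjoint A) (hB : IsSelfAdjoint B)
    (hexp : ∀ β : ℝ, 0 ≤ β → PosPres P (NormedSpace.exp (-(β : ℂ) • A)))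
    (hBerg : IsErgodic P B) :
    (∀ β : ℝ, 0 < β → PosImp P (NormedSpace.exp (-(β : ℂ) • (A - B)))) ∧
    (∀ s : ℝ, -specInf (A - B) < s →
      IsUnit ((A - B) + (s : ℂ) • 1) ∧
        PosImp P (Ring.inverse ((A - B) + (s : ℂ) • 1))) := by
  have hsemigroup : ∀ β : ℝ, 0 < β → PosImp P (expNeg (A - B) β) :=
    fun β => posImp_expNeg_sub hP hA hB hexp hBerg
  refine ⟨hsemigroup, fun s hs => ⟨isUnit_add_smul_one hs, ?_⟩⟩
  refine posImp_of_tendsto_integral hP (fun t ht => ?_)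
    (tendsto_integral_expNeg (isUnit_add_smul_one hs) (tendsto_expNeg_add_smul_one (hA.sub hB) hs))
  rw [expNeg_add_smul_one]
  exact (hsemigroup t ht).ofReal_smul hP (Real.exp_pos _)

/-- Proposition A.8: if `e^{-βA} ⊵ 0` w.r.t. `P` for all `β ≥ 0` and `B` is ergodic
w.r.t. `P`, then `e^{-β(A-B)} ⊳ 0` w.r.t. `P` for all `β > 0`; in particular the
resolvents `((A-B) + s)⁻¹`, `s > -E(A-B)`, improve positivity w.r.t. `P`. -/
theorem exp_sub_ergodic_posImp [CompleteSpace H] [Nontrivial H]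
    (P : Set H) (hP : IsSelfDualCone P) (A B : H →L[ℂ] H)
    (hA : IsSelfAdjoint A) (hB : IsSelfAdjoint B)
    (hexp : ∀ β : ℝ, 0 ≤ β → PosPres P (NormedSpace.exp (-(β : ℂ) • A)))
    (hBerg : IsErgodic P B) :
    (∀ β : ℝ, 0 < β → PosImp P (NormedSpace.exp (-(β : ℂ) • (A - B)))) ∧
    (∀ s : ℝ, -specInf (A - B) < s →
      IsUnit ((A - B) + (s : ℂ) • 1) ∧
        PosImp P (Ring.inverse ((A - B) + (s : ℂ) • 1))) :=
  exp_sub_ergodic_posImp_general P hP A B hA hB hexp hBerg
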